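/- Let 0 < α < 1, 0 < β < 1 with α + β < 1, and let −∞ < a < b < +∞. Let f be continuously differentiable on [a,b] and suppose the sequential Caputo derivative 𝒟^α_{a+}𝒟^β_{a+} f exists on (a,b) and extends continuously to [a,b]. If f attains its minimum over [a,b] at a point x* ∈ (a,b), then (𝒟^α_{a+}𝒟^β_{a+} f)(x*) ≤ ((α+β−1)/Γ(2−α−β)) · (x*−a)^{−α−β} · (f(a) − f(x*)) ≤ 0. -/

import Mathlib

open Set

/-- The Caputo fractional derivative of order `γ` with base point `a`:
`(𝒟^γ_{a+} f)(t) = (1/Γ(1−γ)) ∫_a^t (t−s)^{−γ} f′(s) ds`. -/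
noncomputable def caputo (γ a : ℝ) (f : ℝ → ℝ) (t : ℝ) : ℝ :=
  (1 / Real.Gamma (1 - γ)) * ∫ s in a..t, (t - s) ^ (-γ) * deriv f s

/-- The fractional integral appearing in the sequential Caputo derivative:
`t ↦ (1/Γ(1−α)) ∫_a^t (t−s)^{−α} (𝒟^β_{a+} f)(s) ds`. -/
noncomputable def seqCaputoAux (α β a : ℝ) (f : ℝ → ℝ) (t : ℝ) : ℝ :=
  (1 / Real.Gamma (1 - α)) * ∫ s in a..t, (t - s) ^ (-α) * caputo β a f s

/-- The sequential Caputo derivative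
`(𝒟^α_{a+}𝒟^β_{a+} f)(t) = (d/dt)[(1/Γ(1−α)) ∫_a^t (t−s)^{−α} (𝒟^β_{a+} f)(s) ds]`. -/
noncomputable def seqCaputo (α β a : ℝ) (f : ℝ → ℝ) : ℝ → ℝ :=
  deriv (seqCaputoAux α β a f)

/-!
Write `I^μ` for the Riemann–Liouville integral and `γ = α + β`. Dirichlet's formula and the Beta
integral give the semigroup law `I^μ I^ν = I^(μ+ν)`, so the function differentiated in the
sequential derivative is `I^(1-α) I^(1-β) f' = I^(1-γ) I^1 f' = I^(1-γ) (f - f a)`. Splitting off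
the constant `f a - f x*` leaves `I^(1-γ) (f - f x*)` plus a multiple of `(t - a)^(1-γ)`, whose
derivative at `x*` is minus the bound in the statement. As `f - f x* ≥ 0` and the kernel
`(t - s)^(-γ)` decreases in `t`, the increment of `I^(1-γ) (f - f x*)` from `x*` to `t` is at most
the contribution of `[x*, t]`, which is `O((t - x*)^(2-γ))` because `f - f x* = O(s - x*)`; so its
right derivative at `x*` is nonpositive.
-/

open MeasureTheory Filter Topology

theorem integral_rpow_mul_sub_rpow {μ ν c : ℝ} (hμ : 0 < μ) (hν : 0 < ν) (hc : 0 < c) :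
    ∫ x in (0 : ℝ)..c, x ^ (ν - 1) * (c - x) ^ (μ - 1)
      = Real.Gamma μ * Real.Gamma ν / Real.Gamma (μ + ν) * c ^ (μ + ν - 1) := by
  have h := Complex.betaIntegral_scaled ν μ hc
  rw [Complex.betaIntegral_eq_Gamma_mul_div _ _ (by simpa) (by simpa)] at h
  apply Complex.ofReal_injective
  rw [← intervalIntegral.integral_ofReal]
  calc _ = ∫ x in (0 : ℝ)..c, (x : ℂ) ^ ((ν : ℂ) - 1) * ((c : ℂ) - x) ^ ((μ : ℂ) - 1) := by
        refine intervalIntegral.integral_congr fun x hx => ?_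
        rw [uIcc_of_le hc.le] at hx
        push_cast
        rw [Complex.ofReal_cpow hx.1, Complex.ofReal_cpow (sub_nonneg.2 hx.2)]
        push_cast; ring_nf
    _ = _ := by
        rw [h, ← Complex.ofReal_add, Complex.Gamma_ofReal, Complex.Gamma_ofReal,
          Complex.Gamma_ofReal, ← Complex.ofReal_one, ← Complex.ofReal_sub,
          ← Complex.ofReal_cpow hc.le]
        push_cast; rw [add_comm ν μ]; ring

theorem integral_sub_rpow_mul_sub_rpow {μ ν u t : ℝ} (hμ : 0 < μ) (hν : 0 < ν) (hut : u < t) :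
    ∫ s in u..t, (t - s) ^ (μ - 1) * (s - u) ^ (ν - 1)
      = Real.Gamma μ * Real.Gamma ν / Real.Gamma (μ + ν) * (t - u) ^ (μ + ν - 1) := by
  have h := intervalIntegral.integral_comp_sub_right
    (fun x => x ^ (ν - 1) * (t - u - x) ^ (μ - 1)) (a := u) (b := t) u
  simp only [sub_self, sub_sub_sub_cancel_right] at h
  rw [← integral_rpow_mul_sub_rpow hμ hν (sub_pos.2 hut), ← h]
  exact intervalIntegral.integral_congr fun s _ => mul_comm _ _

theorem intervalIntegrable_sub_rpow {μ : ℝ} (hμ : 0 < μ) (t c d : ℝ) :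
    IntervalIntegrable (fun s => (t - s) ^ (μ - 1)) volume c d := by
  simpa using (intervalIntegral.intervalIntegrable_rpow' (a := t - c) (b := t - d) (r := μ - 1)
    (by linarith)).comp_sub_left t

theorem integral_sub_rpow {μ : ℝ} (hμ : 0 < μ) (u t : ℝ) :
    ∫ s in u..t, (t - s) ^ (μ - 1) = (t - u) ^ μ / μ := by
  rw [intervalIntegral.integral_comp_sub_left (fun x => x ^ (μ - 1)) t, sub_self,
    integral_rpow (Or.inl (by linarith)), sub_add_cancel, Real.zero_rpow hμ.ne', sub_zero]

noncomputable def riemannLiouville (μ a : ℝ) (g : ℝ → ℝ) (t : ℝ) : ℝ :=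
  (Real.Gamma μ)⁻¹ * ∫ s in a..t, (t - s) ^ (μ - 1) * g s

theorem riemannLiouville_congr {μ a t : ℝ} {g₁ g₂ : ℝ → ℝ} (h : EqOn g₁ g₂ (uIcc a t)) :
    riemannLiouville μ a g₁ t = riemannLiouville μ a g₂ t := by
  rw [riemannLiouville, riemannLiouville, intervalIntegral.integral_congr fun s hs => by rw [h hs]]

theorem riemannLiouville_one_of_hasDerivAt {a t : ℝ} {f f' : ℝ → ℝ}
    (hf : ∀ x ∈ uIcc a t, HasDerivAt f (f' x) x) (hf' : IntervalIntegrable f' volume a t) :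
    riemannLiouville 1 a f' t = f t - f a := by
  simp only [riemannLiouville, sub_self, Real.rpow_zero, one_mul, Real.Gamma_one, inv_one]
  exact intervalIntegral.integral_eq_sub_of_hasDerivAt hf hf'

theorem riemannLiouville_sub_const {μ a t : ℝ} (hμ : 0 < μ) {g : ℝ → ℝ}
    (hg : IntervalIntegrable (fun s => (t - s) ^ (μ - 1) * g s) volume a t) (c : ℝ) :
    riemannLiouville μ a (fun s => g s - c) t
      = riemannLiouville μ a g t - c * (t - a) ^ μ / Real.Gamma (μ + 1) := by
  simp only [riemannLiouville, mul_sub]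
  rw [intervalIntegral.integral_sub hg ((intervalIntegrable_sub_rpow hμ t a t).mul_const c),
    intervalIntegral.integral_mul_const, integral_sub_rpow hμ, Real.Gamma_add_one hμ.ne']
  field_simp

theorem caputo_eq_riemannLiouville (β a : ℝ) (f : ℝ → ℝ) :
    caputo β a f = riemannLiouville (1 - β) a (deriv f) := by
  ext t
  rw [caputo, riemannLiouville, one_div, sub_sub_cancel_left]

theorem seqCaputoAux_eq_riemannLiouville (α β a : ℝ) (f : ℝ → ℝ) :
    seqCaputoAux α β a f = riemannLiouville (1 - α) a (riemannLiouville (1 - β) a (deriv f)) := by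
  ext t
  rw [seqCaputoAux, riemannLiouville, one_div, sub_sub_cancel_left, caputo_eq_riemannLiouville]

def triangle (a t : ℝ) : Set (ℝ × ℝ) := {z | a < z.2 ∧ z.2 ≤ z.1 ∧ z.1 ≤ t}

theorem measurableSet_triangle (a t : ℝ) : MeasurableSet (triangle a t) :=
  (measurableSet_lt measurable_const measurable_snd).inter
    ((measurableSet_le measurable_snd measurable_fst).inter
      (measurableSet_le measurable_fst measurable_const))

theorem indicator_triangle_eq_left {E : Type*} [Zero E] (a t : ℝ) (G : ℝ × ℝ → E) (s u : ℝ) :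
    (triangle a t).indicator G (s, u)
      = (Ioc a t).indicator (fun s => (Ioc a s).indicator (fun u => G (s, u)) u) s := by
  simp only [triangle, indicator_apply, mem_ofPred_eq, mem_Ioc]
  grind

theorem integral_indicator_triangle_left {E : Type*} [NormedAddCommGroup E] [NormedSpace ℝ E]
    (a t : ℝ) (G : ℝ × ℝ → E) (s : ℝ) :
    ∫ u, (triangle a t).indicator G (s, u)
      = (Ioc a t).indicator (fun s => ∫ u in Ioc a s, G (s, u)) s := by
  by_cases hs : s ∈ Ioc a t <;>
    simp [indicator_triangle_eq_left, hs, integral_indicator measurableSet_Ioc]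

theorem indicator_triangle_eq_right {E : Type*} [Zero E] (a t : ℝ) (G : ℝ × ℝ → E) (s u : ℝ) :
    (triangle a t).indicator G (s, u)
      = (Ioc a t).indicator (fun u => (Icc u t).indicator (fun s => G (s, u)) s) u := by
  simp only [triangle, indicator_apply, mem_ofPred_eq, mem_Ioc, mem_Icc]
  grind

theorem integral_indicator_triangle_right {E : Type*} [NormedAddCommGroup E] [NormedSpace ℝ E]
    (a t : ℝ) (G : ℝ × ℝ → E) (u : ℝ) :
    ∫ s, (triangle a t).indicator G (s, u)
      = (Ioc a t).indicator (fun u => ∫ s in Icc u t, G (s, u)) u := by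
  by_cases hu : u ∈ Ioc a t <;>
    simp [indicator_triangle_eq_right, hu, integral_indicator measurableSet_Icc]

theorem integral_integral_swap_triangle {E : Type*} [NormedAddCommGroup E] [NormedSpace ℝ E]
    {F : ℝ → ℝ → E} {a t : ℝ} (hat : a ≤ t)
    (hF : IntegrableOn (Function.uncurry F) (triangle a t)) :
    ∫ s in a..t, ∫ u in a..s, F s u = ∫ u in a..t, ∫ s in u..t, F s u := by
  have hint : Integrable
      (Function.uncurry fun s u => (triangle a t).indicator (Function.uncurry F) (s, u))
      (volume.prod volume) := by
    rw [← Measure.volume_eq_prod]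
    exact (integrable_indicator_iff (measurableSet_triangle a t)).2 hF
  have hswap := integral_integral_swap hint
  simp only [integral_indicator_triangle_left, integral_indicator_triangle_right,
    integral_indicator measurableSet_Ioc, Function.uncurry_apply_pair] at hswap
  rw [intervalIntegral.integral_of_le hat, intervalIntegral.integral_of_le hat]
  convert hswap using 1 <;> refine setIntegral_congr_fun measurableSet_Ioc fun x hx => ?_
  · rw [intervalIntegral.integral_of_le hx.1.le]
  · rw [intervalIntegral.integral_of_le hx.2, integral_Icc_eq_integral_Ioc]

theorem integrableOn_triangle_rpow_mul_rpow {μ ν : ℝ} (hμ : 0 < μ) (hν : 0 < ν) (a t : ℝ) :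
    IntegrableOn (fun z : ℝ × ℝ => (t - z.1) ^ (μ - 1) * (z.1 - z.2) ^ (ν - 1)) (triangle a t) := by
  set k := fun z : ℝ × ℝ => (t - z.1) ^ (μ - 1) * (z.1 - z.2) ^ (ν - 1)
  have hk : Measurable k := by fun_prop
  have hk0 : ∀ z, ‖(triangle a t).indicator k z‖ = (triangle a t).indicator k z := fun z =>
    Real.norm_of_nonneg (indicator_nonneg (fun z hz => mul_nonneg
      (Real.rpow_nonneg (sub_nonneg.2 hz.2.2) _) (Real.rpow_nonneg (sub_nonneg.2 hz.2.1) _)) z)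
  have hsection : ∀ s ∈ Ioc a t, IntegrableOn (fun u => k (s, u)) (Ioc a s) :=
    fun s hs => (intervalIntegrable_iff_integrableOn_Ioc_of_le hs.1.le).1
      ((intervalIntegrable_sub_rpow hν s a s).const_mul ((t - s) ^ (μ - 1)))
  rw [← integrable_indicator_iff (measurableSet_triangle a t), Measure.volume_eq_prod,
    integrable_prod_iff (hk.indicator (measurableSet_triangle a t)).aestronglyMeasurable]
  refine ⟨Eventually.of_forall fun s => ?_, ?_⟩
  · by_cases hs : s ∈ Ioc a t
    · simp only [indicator_triangle_eq_left, indicator_of_mem hs]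
      exact (integrable_indicator_iff measurableSet_Ioc).2 (hsection s hs)
    · simp [indicator_triangle_eq_left, hs]
  · have hnorm : ∀ s, ∫ u, ‖(triangle a t).indicator k (s, u)‖
        = (Ioc a t).indicator (fun s => (t - s) ^ (μ - 1) * ((s - a) ^ ν / ν)) s := by
      intro s
      simp only [hk0, integral_indicator_triangle_left]
      refine congrFun (indicator_congr fun x hx => ?_) s
      simp only [k]
      rw [integral_const_mul, ← intervalIntegral.integral_of_le hx.1.le, integral_sub_rpow hν]
    simp only [hnorm]
    refine (integrable_indicator_iff measurableSet_Ioc).2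
      ((intervalIntegrable_iff.1 ?_).mono_set Ioc_subset_uIoc)
    exact (intervalIntegrable_sub_rpow hμ t a t).mul_continuousOn (((continuous_id.sub
      continuous_const).rpow_const fun _ => Or.inr hν.le).div_const ν).continuousOn

theorem riemannLiouville_riemannLiouville {μ ν a t M : ℝ} {g : ℝ → ℝ} (hμ : 0 < μ) (hν : 0 < ν)
    (hat : a ≤ t) (hg : Measurable g) (hM : ∀ u ∈ Ioc a t, |g u| ≤ M) :
    riemannLiouville μ a (riemannLiouville ν a g) t = riemannLiouville (μ + ν) a g t := by
  have hF : IntegrableOn (fun z : ℝ × ℝ => (t - z.1) ^ (μ - 1) * (z.1 - z.2) ^ (ν - 1) * g z.2)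
      (triangle a t) :=
    (integrableOn_triangle_rpow_mul_rpow hμ hν a t).mul_bdd
      (hg.comp measurable_snd).aestronglyMeasurable
      (ae_restrict_of_forall_mem (measurableSet_triangle a t) fun z hz =>
        hM z.2 ⟨hz.1, hz.2.1.trans hz.2.2⟩)
  have hinner : ∀ u ∈ Ioo a t, ∫ s in u..t, (t - s) ^ (μ - 1) * (s - u) ^ (ν - 1) * g u
      = Real.Gamma μ * Real.Gamma ν / Real.Gamma (μ + ν) * ((t - u) ^ (μ + ν - 1) * g u) := by
    intro u hu
    rw [intervalIntegral.integral_mul_const, integral_sub_rpow_mul_sub_rpow hμ hν hu.2, mul_assoc]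
  calc (Real.Gamma μ)⁻¹ * ∫ s in a..t, (t - s) ^ (μ - 1) * riemannLiouville ν a g s
      = (Real.Gamma μ)⁻¹ * (Real.Gamma ν)⁻¹
          * ∫ s in a..t, ∫ u in a..s, (t - s) ^ (μ - 1) * (s - u) ^ (ν - 1) * g u := by
        simp only [riemannLiouville, ← intervalIntegral.integral_const_mul, mul_assoc]
        simp only [mul_left_comm]
    _ = (Real.Gamma μ)⁻¹ * (Real.Gamma ν)⁻¹
          * ∫ u in a..t, ∫ s in u..t, (t - s) ^ (μ - 1) * (s - u) ^ (ν - 1) * g u := by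
        rw [integral_integral_swap_triangle
          (F := fun s u => (t - s) ^ (μ - 1) * (s - u) ^ (ν - 1) * g u) hat hF]
    _ = (Real.Gamma μ)⁻¹ * (Real.Gamma ν)⁻¹ * ∫ u in a..t,
          Real.Gamma μ * Real.Gamma ν / Real.Gamma (μ + ν) * ((t - u) ^ (μ + ν - 1) * g u) := by
        rw [intervalIntegral.integral_of_le hat, intervalIntegral.integral_of_le hat,
          integral_Ioc_eq_integral_Ioo, integral_Ioc_eq_integral_Ioo,
          setIntegral_congr_fun measurableSet_Ioo hinner]
    _ = riemannLiouville (μ + ν) a g t := by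
        rw [intervalIntegral.integral_const_mul, riemannLiouville, add_sub_right_comm]
        field_simp [(Real.Gamma_pos_of_pos hμ).ne', (Real.Gamma_pos_of_pos hν).ne']

theorem riemannLiouville_sub_riemannLiouville_le {μ a x t c : ℝ} {g : ℝ → ℝ} (hμ : 0 < μ)
    (hμ1 : μ ≤ 1) (hax : a ≤ x) (hxt : x ≤ t) (hg : ContinuousOn g (Icc a t))
    (hg0 : ∀ s ∈ Icc a x, 0 ≤ g s) (hgc : ∀ s ∈ Icc x t, g s ≤ c) :
    riemannLiouville μ a g t - riemannLiouville μ a g x ≤ c * (t - x) ^ μ / Real.Gamma (μ + 1) := by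
  have hint : ∀ y, ∀ d ∈ Icc a t, ∀ e ∈ Icc a t,
      IntervalIntegrable (fun s => (y - s) ^ (μ - 1) * g s) volume d e := fun y d hd e he =>
    (intervalIntegrable_sub_rpow hμ y d e).mul_continuousOn (hg.mono (uIcc_subset_Icc hd he))
  have ha : a ∈ Icc a t := ⟨le_rfl, hax.trans hxt⟩
  have hx : x ∈ Icc a t := ⟨hax, hxt⟩
  have ht : t ∈ Icc a t := ⟨hax.trans hxt, le_rfl⟩
  have hhead : ∫ s in a..x, (t - s) ^ (μ - 1) * g s ≤ ∫ s in a..x, (x - s) ^ (μ - 1) * g s :=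
    intervalIntegral.integral_mono_on_of_le_Ioo hax (hint t a ha x hx) (hint x a ha x hx)
      fun s hs => mul_le_mul_of_nonneg_right
        (Real.rpow_le_rpow_of_nonpos (sub_pos.2 hs.2) (by linarith) (by linarith))
        (hg0 s (Ioo_subset_Icc_self hs))
  have htail : ∫ s in x..t, (t - s) ^ (μ - 1) * g s ≤ c * ((t - x) ^ μ / μ) := by
    calc ∫ s in x..t, (t - s) ^ (μ - 1) * g s ≤ ∫ s in x..t, (t - s) ^ (μ - 1) * c :=
          intervalIntegral.integral_mono_on hxt (hint t x hx t ht)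
            ((intervalIntegrable_sub_rpow hμ t x t).mul_const c) fun s hs =>
              mul_le_mul_of_nonneg_left (hgc s hs) (Real.rpow_nonneg (by linarith [hs.2]) _)
      _ = c * ((t - x) ^ μ / μ) := by
        rw [intervalIntegral.integral_mul_const, integral_sub_rpow hμ, mul_comm]
  have hΓ : 0 < Real.Gamma μ := Real.Gamma_pos_of_pos hμ
  rw [riemannLiouville, riemannLiouville,
    ← intervalIntegral.integral_add_adjacent_intervals (hint t a ha x hx) (hint t x hx t ht),
    Real.Gamma_add_one hμ.ne']
  calc (Real.Gamma μ)⁻¹ * ((∫ s in a..x, (t - s) ^ (μ - 1) * g s)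
        + ∫ s in x..t, (t - s) ^ (μ - 1) * g s)
        - (Real.Gamma μ)⁻¹ * ∫ s in a..x, (x - s) ^ (μ - 1) * g s
      ≤ (Real.Gamma μ)⁻¹ * (c * ((t - x) ^ μ / μ)) := by
        rw [← mul_sub]
        gcongr
        linarith
    _ = c * (t - x) ^ μ / (μ * Real.Gamma μ) := by
        field_simp

theorem nonpos_of_hasDerivWithinAt_riemannLiouville_of_isMinOn {μ a b x L : ℝ} {f : ℝ → ℝ}
    (hμ : 0 < μ) (hμ1 : μ ≤ 1) (hx : x ∈ Ioo a b) (hf : ContinuousOn f (Icc a b))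
    (hmin : IsMinOn f (Icc a b) x) (hfx : DifferentiableWithinAt ℝ f (Ioi x) x)
    (hL : HasDerivWithinAt (riemannLiouville μ a fun s => f s - f x) L (Ioi x) x) : L ≤ 0 := by
  obtain ⟨C, hC0, hC⟩ := hfx.isBigO_sub.exists_nonneg
  obtain ⟨u, hxu, hu⟩ := mem_nhdsGT_iff_exists_Ioo_subset.1 hC.bound
  have hslope : ∀ t ∈ Ioo x (min u b), slope (riemannLiouville μ a fun s => f s - f x) x t
      ≤ C * (t - x) ^ μ / Real.Gamma (μ + 1) := by
    intro t ht
    have htu : t < u := ht.2.trans_le (min_le_left _ _)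
    have htb : t < b := ht.2.trans_le (min_le_right _ _)
    have hgc : ∀ s ∈ Icc x t, f s - f x ≤ C * (t - x) := by
      intro s hs
      rcases hs.1.eq_or_lt with rfl | hxs
      · rw [sub_self]; exact mul_nonneg hC0 (sub_nonneg.2 hs.2)
      · have hbound : ‖f s - f x‖ ≤ C * ‖s - x‖ := hu ⟨hxs, hs.2.trans_lt htu⟩
        rw [Real.norm_eq_abs, Real.norm_of_nonneg (sub_nonneg.2 hxs.le)] at hbound
        nlinarith [le_abs_self (f s - f x), hs.2]
    have hle := riemannLiouville_sub_riemannLiouville_le hμ hμ1 hx.1.le ht.1.le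
      ((hf.sub continuousOn_const).mono (Icc_subset_Icc_right htb.le))
      (fun s hs => sub_nonneg.2 (hmin ⟨hs.1, hs.2.trans hx.2.le⟩)) hgc
    rw [slope_def_field, div_le_iff₀ (sub_pos.2 ht.1)]
    exact hle.trans_eq (by ring)
  have hlim : Tendsto (fun t => C * (t - x) ^ μ / Real.Gamma (μ + 1)) (𝓝[>] x) (𝓝 0) := by
    have hcont : Continuous fun t => C * (t - x) ^ μ / Real.Gamma (μ + 1) :=
      (((continuous_id.sub continuous_const).rpow_const fun _ => Or.inr hμ.le).const_mul
        C).div_const _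
    simpa [Real.zero_rpow hμ.ne'] using (hcont.tendsto x).mono_left nhdsWithin_le_nhds
  exact le_of_tendsto_of_tendsto ((hasDerivWithinAt_iff_tendsto_slope' self_notMem_Ioi).1 hL) hlim
    (eventually_of_mem (Ioo_mem_nhdsGT (lt_min hxu hx.2)) hslope)

theorem seqCaputoAux_eq_riemannLiouville_sub {α β a t : ℝ} {f : ℝ → ℝ} (hα : α < 1) (hβ : β < 1)
    (hαβ : α + β < 1) (hat : a ≤ t) (hf : ∀ x ∈ Icc a t, HasDerivAt f (deriv f x) x)
    (hf' : ContinuousOn (deriv f) (Icc a t)) (c : ℝ) :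
    seqCaputoAux α β a f t = riemannLiouville (1 - (α + β)) a (fun s => f s - c) t
      - (f a - c) * (t - a) ^ (1 - (α + β)) / Real.Gamma (2 - α - β) := by
  obtain ⟨M, hM⟩ := isCompact_Icc.exists_bound_of_continuousOn hf'
  have hM' : ∀ u ∈ Ioc a t, |deriv f u| ≤ M := fun u hu => hM u (Ioc_subset_Icc_self hu)
  have hfc : ContinuousOn f (Icc a t) := fun x hx => (hf x hx).continuousAt.continuousWithinAt
  have hμ : 0 < 1 - (α + β) := by linarith
  have hFTC : EqOn (riemannLiouville 1 a (deriv f)) (fun s => f s - c - (f a - c)) (uIcc a t) := by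
    intro s hs
    rw [uIcc_of_le hat] at hs
    have hsub : uIcc a s ⊆ Icc a t := uIcc_subset_Icc (left_mem_Icc.2 hat) hs
    rw [riemannLiouville_one_of_hasDerivAt (fun x hx => hf x (hsub hx))
      (hf'.mono hsub).intervalIntegrable]
    ring
  rw [seqCaputoAux_eq_riemannLiouville, riemannLiouville_riemannLiouville (by linarith)
      (by linarith) hat (measurable_deriv f) hM', show 1 - α + (1 - β) = 1 - (α + β) + 1 by ring,
    ← riemannLiouville_riemannLiouville hμ one_pos hat (measurable_deriv f) hM',
    riemannLiouville_congr hFTC, riemannLiouville_sub_const (g := fun s => f s - c) hμ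
      ((intervalIntegrable_sub_rpow hμ t a t).mul_continuousOn
        ((hfc.sub continuousOn_const).mono (uIcc_of_le hat).subset)),
    show 1 - (α + β) + 1 = 2 - α - β by ring]

theorem seqCaputo_min_estimate_of_lt_one_general
    (α β a b : ℝ) (f : ℝ → ℝ) (xs : ℝ)
    (hα0 : 0 < α) (hα1 : α < 1) (hβ0 : 0 < β) (hβ1 : β < 1)
    (hsum : α + β < 1) (hab : a < b)
    (hf : ∀ x ∈ Set.Icc a b, HasDerivAt f (deriv f x) x)
    (hf' : ContinuousOn (deriv f) (Set.Icc a b))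
    (hex : ∀ x ∈ Set.Ioo a b,
      HasDerivAt (seqCaputoAux α β a f) (seqCaputo α β a f x) x)
    (hxs : xs ∈ Set.Ioo a b)
    (hmin : ∀ x ∈ Set.Icc a b, f xs ≤ f x) :
    seqCaputo α β a f xs
        ≤ (α + β - 1) / Real.Gamma (2 - α - β) * (xs - a) ^ (-(α + β)) * (f a - f xs) ∧
      (α + β - 1) / Real.Gamma (2 - α - β) * (xs - a) ^ (-(α + β)) * (f a - f xs) ≤ 0 := by
  set T := (α + β - 1) / Real.Gamma (2 - α - β) * (xs - a) ^ (-(α + β)) * (f a - f xs)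
  have hpow : HasDerivAt (fun t => (f a - f xs) * (t - a) ^ (1 - (α + β)) / Real.Gamma (2 - α - β))
      (-T) xs := by
    refine ((((hasDerivAt_id' xs).sub_const a).rpow_const
      (Or.inl (sub_pos.2 hxs.1).ne')).const_mul (f a - f xs) |>.div_const _).congr_deriv ?_
    rw [show 1 - (α + β) - 1 = -(α + β) by ring]
    ring
  have hrepr : ∀ t ∈ Icc a b, riemannLiouville (1 - (α + β)) a (fun s => f s - f xs) t
      = seqCaputoAux α β a f t + (f a - f xs) * (t - a) ^ (1 - (α + β)) / Real.Gamma (2 - α - β) :=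
    fun t ht => by
      have hsub : Icc a t ⊆ Icc a b := Icc_subset_Icc_right ht.2
      rw [seqCaputoAux_eq_riemannLiouville_sub hα1 hβ1 hsum ht.1 (fun x hx => hf x (hsub hx))
        (hf'.mono hsub) (f xs), sub_add_cancel]
  have hL := nonpos_of_hasDerivWithinAt_riemannLiouville_of_isMinOn (by linarith) (by linarith) hxs
    (fun x hx => (hf x hx).continuousAt.continuousWithinAt) hmin
    (hf xs (Ioo_subset_Icc_self hxs)).differentiableAt.differentiableWithinAt
    (((hex xs hxs).add hpow).congr_of_eventuallyEq
      (eventually_of_mem (Icc_mem_nhds hxs.1 hxs.2) hrepr)).hasDerivWithinAt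
  refine ⟨by linarith, mul_nonpos_of_nonpos_of_nonneg (mul_nonpos_of_nonpos_of_nonneg
    (div_nonpos_of_nonpos_of_nonneg (by linarith) (Real.Gamma_pos_of_pos (by linarith)).le)
    (Real.rpow_nonneg (sub_pos.2 hxs.1).le _)) (sub_nonneg.2 (hmin a (left_mem_Icc.2 hab.le)))⟩

/-- extremum estimate for the sequential Caputo derivative at an
interior minimum point, in the case `α + β < 1`. -/
theorem seqCaputo_min_estimate_of_lt_one
    (α β a b : ℝ) (f : ℝ → ℝ) (xs : ℝ)
    (hα0 : 0 < α) (hα1 : α < 1) (hβ0 : 0 < β) (hβ1 : β < 1)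
    (hsum : α + β < 1) (hab : a < b)
    (hf : ∀ x ∈ Set.Icc a b, HasDerivAt f (deriv f x) x)
    (hf' : ContinuousOn (deriv f) (Set.Icc a b))
    (hex : ∀ x ∈ Set.Ioo a b,
      HasDerivAt (seqCaputoAux α β a f) (seqCaputo α β a f x) x)
    (hcont : ∃ g : ℝ → ℝ, ContinuousOn g (Set.Icc a b) ∧
      ∀ x ∈ Set.Ioo a b, g x = seqCaputo α β a f x)
    (hxs : xs ∈ Set.Ioo a b)
    (hmin : ∀ x ∈ Set.Icc a b, f xs ≤ f x) :
    seqCaputo α β a f xs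
        ≤ (α + β - 1) / Real.Gamma (2 - α - β) * (xs - a) ^ (-(α + β)) * (f a - f xs) ∧
      (α + β - 1) / Real.Gamma (2 - α - β) * (xs - a) ^ (-(α + β)) * (f a - f xs) ≤ 0 :=
  seqCaputo_min_estimate_of_lt_one_general α β a b f xs hα0 hα1 hβ0 hβ1 hsum hab hf hf' hex hxs hmin
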